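/- Let p be a prime number, n a positive integer, k a perfect field of characteristic p, and W = W_n(k) the ring of p-typical Witt vectors of k of length n. Let B be a smooth W-algebra and A an algebra over the polynomial ring B[T] which is étale over B[T]; let t ∈ A denote the image of T. Then for every integer i ≥ 1 and every element ω of the i-th exterior power Ω^i_{A/W} := ⋀^i_A Ω_{A/W} of the module of Kähler differentials, the following are equivalent: (i) ω ∧ dt ∈ t · Ω^{i+1}_{A/W}; (ii) ω ∈ t · Ω^i_{A/W} + { η ∧ dt : η ∈ Ω^{i−1}_{A/W} }, i.e., ω can be written as t·ω₁ + ω₂ ∧ dt with ω₁ ∈ Ω^i_{A/W} and ω₂ ∈ Ω^{i−1}_{A/W}. -/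

import Mathlib

/-!
For `A` formally étale over `B[T]`, `Ω[A⁄W] ≅ A ⊗ Ω[B[T]⁄W]`, so `d/dT` induces a functional `φ`
on `Ω[A⁄W]` with `φ (dt) = 1`. Right contraction by `φ` lowers degrees by one and satisfies
`(ω ∧ dt)⌊φ = ω - (ω⌊φ) ∧ dt`; hence `ω ∧ dt = t • η` forces `ω = t • (η⌊φ) + (ω⌊φ) ∧ dt`.
-/

open CliffordAlgebra

namespace ExteriorAlgebra

variable {R M : Type*} [CommRing R] [AddCommGroup M] [Module R M]

theorem contractRight_mem_exteriorPower (d : Module.Dual R M) {n : ℕ}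
    {x : ExteriorAlgebra R M} (hx : x ∈ ⋀[R]^(n + 1) M) : contractRight x d ∈ ⋀[R]^n M := by
  induction n generalizing x with
  | zero =>
    rw [zero_add, exteriorPower, pow_one] at hx
    obtain ⟨m, rfl⟩ := hx
    rw [contractRight_ι]
    exact Submodule.algebraMap_mem _
  | succ n ih =>
    rw [exteriorPower, pow_succ] at hx
    induction hx using Submodule.mul_induction_on' with
    | mem_mul_mem a ha v hv =>
      obtain ⟨m, rfl⟩ := hv
      rw [contractRight_mul_ι]
      refine sub_mem (Submodule.smul_mem _ _ ha) ?_
      rw [exteriorPower, pow_succ]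
      exact Submodule.mul_mem_mul (ih ha) (LinearMap.mem_range_self _ m)
    | add _ _ _ _ hx hy =>
      rw [map_add, LinearMap.add_apply]
      exact add_mem hx hy

theorem eq_contractRight_mul_ι_add (d : Module.Dual R M) {v : M} (hv : d v = 1)
    (x : ExteriorAlgebra R M) : x = contractRight (x * ι R v) d + contractRight x d * ι R v := by
  rw [contractRight_mul_ι, hv, one_smul, sub_add_cancel]

theorem exists_mul_ι_eq_smul_iff (d : Module.Dual R M) {v : M} (hv : d v = 1) (r : R) {n : ℕ}
    {x : ExteriorAlgebra R M} (hx : x ∈ ⋀[R]^(n + 1) M) :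
    (∃ η ∈ ⋀[R]^(n + 2) M, x * ι R v = r • η) ↔
      ∃ x₁ ∈ ⋀[R]^(n + 1) M, ∃ x₂ ∈ ⋀[R]^n M, x = r • x₁ + x₂ * ι R v := by
  constructor
  · rintro ⟨η, hη, hxη⟩
    refine ⟨contractRight η d, contractRight_mem_exteriorPower d hη,
      contractRight x d, contractRight_mem_exteriorPower d hx, ?_⟩
    rw [← LinearMap.smul_apply, ← map_smul, ← hxη]
    exact eq_contractRight_mul_ι_add d hv x
  · rintro ⟨x₁, hx₁, x₂, -, rfl⟩
    refine ⟨x₁ * ι R v, ?_, ?_⟩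
    · rw [exteriorPower, pow_succ]
      exact Submodule.mul_mem_mul hx₁ (LinearMap.mem_range_self _ v)
    · rw [add_mul, smul_mul_assoc, mul_assoc, ι_sq_zero, mul_zero, add_zero]

end ExteriorAlgebra

theorem exists_dual_kaehlerDifferential_D_algebraMap (R S A : Type*) [CommRing R] [CommRing S]
    [CommRing A] [Algebra R S] [Algebra R A] [Algebra S A] [IsScalarTower R S A]
    [Algebra.FormallyEtale S A] (D : Derivation R S A) :
    ∃ φ : Module.Dual A (Ω[A⁄R]), ∀ s, φ (KaehlerDifferential.D R A (algebraMap S A s)) = D s :=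
  ⟨D.liftKaehlerDifferential.liftBaseChange A ∘ₗ
      (KaehlerDifferential.tensorKaehlerEquivOfFormallyEtale R S A).symm.toLinearMap,
    fun s => by simp [KaehlerDifferential.tensorKaehlerEquivOfFormallyEtale_symm_D_algebraMap]⟩

theorem exists_dual_kaehlerDifferential_D_X_eq_one (R B A : Type*) [CommRing R] [CommRing B]
    [CommRing A] [Algebra R B] [Algebra (Polynomial B) A] [Algebra B A] [Algebra R A]
    [IsScalarTower R B A] [IsScalarTower B (Polynomial B) A]
    [Algebra.FormallyEtale (Polynomial B) A] :
    ∃ φ : Module.Dual A (Ω[A⁄R]),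
      φ (KaehlerDifferential.D R A (algebraMap (Polynomial B) A Polynomial.X)) = 1 := by
  have : IsScalarTower R (Polynomial B) A := .of_algebraMap_eq' <| by
    rw [IsScalarTower.algebraMap_eq R B A, IsScalarTower.algebraMap_eq B (Polynomial B) A,
      RingHom.comp_assoc, ← IsScalarTower.algebraMap_eq]
  obtain ⟨φ, hφ⟩ := exists_dual_kaehlerDifferential_D_algebraMap R (Polynomial B) A
    ((Polynomial.mkDerivation B (1 : A)).restrictScalars R)
  exact ⟨φ, by simpa using hφ Polynomial.X⟩

theorem wedge_dlog_criterion_general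
    (p : ℕ) [Fact p.Prime] (n : ℕ)
    (k : Type u) [Field k]
    (B : Type u) [CommRing B] [Algebra (TruncatedWittVector p n k) B]
    (A : Type u) [CommRing A] [Algebra (Polynomial B) A] [Algebra B A]
    [Algebra (TruncatedWittVector p n k) A]
    [IsScalarTower (TruncatedWittVector p n k) B A]
    [IsScalarTower B (Polynomial B) A]
    [Algebra.Etale (Polynomial B) A]
    (i : ℕ) (hi : 1 ≤ i)
    (ω : ExteriorAlgebra A (Ω[A⁄TruncatedWittVector p n k]))
    (hω : ω ∈ (LinearMap.range (ExteriorAlgebra.ι A :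
        Ω[A⁄TruncatedWittVector p n k] →ₗ[A]
          ExteriorAlgebra A (Ω[A⁄TruncatedWittVector p n k]))) ^ i) :
    (∃ η ∈ (LinearMap.range (ExteriorAlgebra.ι A :
          Ω[A⁄TruncatedWittVector p n k] →ₗ[A]
            ExteriorAlgebra A (Ω[A⁄TruncatedWittVector p n k]))) ^ (i + 1),
        ω * ExteriorAlgebra.ι A
            (KaehlerDifferential.D (TruncatedWittVector p n k) A
              (algebraMap (Polynomial B) A Polynomial.X)) =
          algebraMap (Polynomial B) A Polynomial.X • η) ↔
      (∃ ω₁ ∈ (LinearMap.range (ExteriorAlgebra.ι A :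
            Ω[A⁄TruncatedWittVector p n k] →ₗ[A]
              ExteriorAlgebra A (Ω[A⁄TruncatedWittVector p n k]))) ^ i,
        ∃ ω₂ ∈ (LinearMap.range (ExteriorAlgebra.ι A :
            Ω[A⁄TruncatedWittVector p n k] →ₗ[A]
              ExteriorAlgebra A (Ω[A⁄TruncatedWittVector p n k]))) ^ (i - 1),
        ω = algebraMap (Polynomial B) A Polynomial.X • ω₁ +
          ω₂ * ExteriorAlgebra.ι A
            (KaehlerDifferential.D (TruncatedWittVector p n k) A
              (algebraMap (Polynomial B) A Polynomial.X))) := by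
  obtain ⟨j, rfl⟩ := Nat.exists_eq_add_of_le' hi
  obtain ⟨φ, hφ⟩ := exists_dual_kaehlerDifferential_D_X_eq_one (TruncatedWittVector p n k) B A
  exact ExteriorAlgebra.exists_mul_ι_eq_smul_iff φ hφ _ hω

/-- Let `k` be a perfect field of characteristic `p`, `W = W_n(k)` the ring of
`p`-typical Witt vectors of length `n > 0`, `B` a smooth `W`-algebra and `A`
étale over the polynomial ring `B[T]`, with `t ∈ A` the image of `T`.
For `i ≥ 1` and `ω` in the `i`-th exterior power of `Ω[A⁄W]` (realized as the
`i`-th graded piece `(range ι)^i` of the exterior algebra on `Ω[A⁄W]`),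
the following are equivalent:
(i) `ω ∧ dt ∈ t • Ω^{i+1}`;
(ii) `ω = t • ω₁ + ω₂ ∧ dt` for some `ω₁ ∈ Ω^i`, `ω₂ ∈ Ω^{i-1}`. -/
theorem wedge_dlog_criterion
    (p : ℕ) [Fact p.Prime] (n : ℕ) (hn : 0 < n)
    (k : Type u) [Field k] [CharP k p] [PerfectRing k p]
    (B : Type u) [CommRing B] [Algebra (TruncatedWittVector p n k) B]
    [Algebra.Smooth (TruncatedWittVector p n k) B]
    (A : Type u) [CommRing A] [Algebra (Polynomial B) A] [Algebra B A]
    [Algebra (TruncatedWittVector p n k) A]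
    [IsScalarTower (TruncatedWittVector p n k) B A]
    [IsScalarTower B (Polynomial B) A]
    [Algebra.Etale (Polynomial B) A]
    (i : ℕ) (hi : 1 ≤ i)
    (ω : ExteriorAlgebra A (Ω[A⁄TruncatedWittVector p n k]))
    (hω : ω ∈ (LinearMap.range (ExteriorAlgebra.ι A :
        Ω[A⁄TruncatedWittVector p n k] →ₗ[A]
          ExteriorAlgebra A (Ω[A⁄TruncatedWittVector p n k]))) ^ i) :
    (∃ η ∈ (LinearMap.range (ExteriorAlgebra.ι A :
          Ω[A⁄TruncatedWittVector p n k] →ₗ[A]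
            ExteriorAlgebra A (Ω[A⁄TruncatedWittVector p n k]))) ^ (i + 1),
        ω * ExteriorAlgebra.ι A
            (KaehlerDifferential.D (TruncatedWittVector p n k) A
              (algebraMap (Polynomial B) A Polynomial.X)) =
          algebraMap (Polynomial B) A Polynomial.X • η) ↔
      (∃ ω₁ ∈ (LinearMap.range (ExteriorAlgebra.ι A :
            Ω[A⁄TruncatedWittVector p n k] →ₗ[A]
              ExteriorAlgebra A (Ω[A⁄TruncatedWittVector p n k]))) ^ i,
        ∃ ω₂ ∈ (LinearMap.range (ExteriorAlgebra.ι A :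
            Ω[A⁄TruncatedWittVector p n k] →ₗ[A]
              ExteriorAlgebra A (Ω[A⁄TruncatedWittVector p n k]))) ^ (i - 1),
        ω = algebraMap (Polynomial B) A Polynomial.X • ω₁ +
          ω₂ * ExteriorAlgebra.ι A
            (KaehlerDifferential.D (TruncatedWittVector p n k) A
              (algebraMap (Polynomial B) A Polynomial.X))) :=
  wedge_dlog_criterion_general p n k B A i hi ω hω
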